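/- arXiv:2408.15894 — 2 statements merged into one kernel-verified Lean document; each statement's English description precedes it below -/
import Mathlib

section
/- If a graph G has a fibration φ: G → B onto its minimal base B, then for node dynamics governed by a graph convolution layer h_u' = F(Σ_{w ∈ N(−,u)} c · h_w · W) with features constant on fibers, the dynamics on G projects exactly onto the corresponding dynamics on B: the new feature of any node u in G equals the new feature of φ(u) computed on B with edge multiplicities of the base. -/
/-- A finite directed multigraph: a node type, an edge type, and source/target maps. -/
structure FinDigraph where
  V : Type
  E : Type
  [finV : Finite V]
  [finE : Finite E]
  src : E → V
  tgt : E → V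

attribute [instance] FinDigraph.finV FinDigraph.finE

namespace FinDigraph

/-- The far endpoint of a (reversed) path ending at `u`: the list `[e_k, …, e_1]`
represents the directed path `src e_k → ⋯ → tgt e_1 = u`. -/
def farEnd (G : FinDigraph) (u : G.V) : List G.E → G.V
  | [] => u
  | e :: _ => G.src e

/-- `l = [e_k, …, e_1]` is a directed path of `G` ending at `u`. -/
def IsInPath (G : FinDigraph) (u : G.V) : List G.E → Prop
  | [] => True
  | e :: es => IsInPath G u es ∧ G.tgt e = G.farEnd u es

/-- The nodes of the input tree of `u`: all directed paths ending at `u`. -/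
def InPath (G : FinDigraph) (u : G.V) : Type := {l : List G.E // G.IsInPath u l}

/-- The root of the input tree of `u` (the empty path). -/
def root (G : FinDigraph) (u : G.V) : G.InPath u := ⟨[], trivial⟩

/-- The parent of a path in the input tree (drop the farthest edge); the root is its own parent. -/
def parent (G : FinDigraph) (u : G.V) : G.InPath u → G.InPath u
  | ⟨[], h⟩ => ⟨[], h⟩
  | ⟨_ :: es, h⟩ => ⟨es, h.1⟩

/-- Isomorphism of input trees: a bijection of paths preserving root, depth and parent. -/
def InTreeIso (G : FinDigraph) (u : G.V) (H : FinDigraph) (v : H.V) : Prop :=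
  ∃ F : G.InPath u ≃ H.InPath v,
    F (G.root u) = H.root v ∧
    (∀ p, ((F p).1).length = (p.1).length) ∧
    (∀ p, F (G.parent u p) = H.parent v (F p))

/-- The reverse graph (all edges flipped). -/
def rev (G : FinDigraph) : FinDigraph :=
  { V := G.V, E := G.E, src := G.tgt, tgt := G.src }

/-- Isomorphism of output trees = isomorphism of input trees in the reverse graphs. -/
def OutTreeIso (G : FinDigraph) (u : G.V) (H : FinDigraph) (v : H.V) : Prop :=
  InTreeIso (rev G) u (rev H) v

/-- A homomorphism of directed multigraphs. -/
structure Hom (G H : FinDigraph) where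
  onV : G.V → H.V
  onE : G.E → H.E
  map_src : ∀ e, H.src (onE e) = onV (G.src e)
  map_tgt : ∀ e, H.tgt (onE e) = onV (G.tgt e)

/-- Isomorphism of directed multigraphs. -/
def IsIso (G H : FinDigraph) : Prop :=
  ∃ φ : Hom G H, Function.Bijective φ.onV ∧ Function.Bijective φ.onE

/-- Fibration equivalence of nodes: isomorphic input trees. -/
def fibEquiv (G : FinDigraph) (u v : G.V) : Prop := InTreeIso G u G v

/-- Covering equivalence of nodes: isomorphic input trees and isomorphic output trees. -/
def covEquiv (G : FinDigraph) (u v : G.V) : Prop :=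
  InTreeIso G u G v ∧ OutTreeIso G u G v

/-- Orbit equivalence: some automorphism maps one node to the other. -/
def orbitEquiv (G : FinDigraph) (u v : G.V) : Prop :=
  ∃ φ : Hom G G, Function.Bijective φ.onV ∧ Function.Bijective φ.onE ∧ φ.onV u = v

theorem inTreeIso_refl (G : FinDigraph) (u : G.V) : InTreeIso G u G u :=
  ⟨Equiv.refl _, rfl, fun _ => rfl, fun _ => rfl⟩

theorem inTreeIso_symm {G : FinDigraph} {u : G.V} {H : FinDigraph} {v : H.V}
    (h : InTreeIso G u H v) : InTreeIso H v G u := by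
  obtain ⟨F, hroot, hlen, hpar⟩ := h
  refine ⟨F.symm, ?_, ?_, ?_⟩
  · rw [← hroot, Equiv.symm_apply_apply]
  · intro p; rw [← hlen (F.symm p), Equiv.apply_symm_apply]
  · intro p
    apply F.injective
    rw [Equiv.apply_symm_apply, hpar (F.symm p), Equiv.apply_symm_apply]

theorem inTreeIso_trans {G : FinDigraph} {u : G.V} {H : FinDigraph} {v : H.V}
    {K : FinDigraph} {w : K.V}
    (h₁ : InTreeIso G u H v) (h₂ : InTreeIso H v K w) : InTreeIso G u K w := by
  obtain ⟨F, fr, fl, fp⟩ := h₁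
  obtain ⟨F', gr, gl, gp⟩ := h₂
  refine ⟨F.trans F', ?_, ?_, ?_⟩
  · simp [Equiv.trans_apply, fr, gr]
  · intro p; simp [Equiv.trans_apply, gl, fl]
  · intro p; simp [Equiv.trans_apply, fp, gp]

/-- The setoid of fibration equivalence (isomorphism of input trees). -/
def fibSetoid (G : FinDigraph) : Setoid G.V :=
  ⟨fibEquiv G, ⟨fun u => inTreeIso_refl G u, inTreeIso_symm, inTreeIso_trans⟩⟩

/-- The minimal fibration base of `G`: nodes are the fibers (input-tree isomorphism
classes), and the edges from a fiber `C'` into a fiber `C` are the edges of `G` from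
nodes of `C'` into the chosen representative of `C`. -/
def base (G : FinDigraph) : FinDigraph where
  V := Quotient (fibSetoid G)
  E := {e : G.E // G.tgt e = (Quotient.mk (fibSetoid G) (G.tgt e)).out}
  src e := Quotient.mk (fibSetoid G) (G.src e.1)
  tgt e := Quotient.mk (fibSetoid G) (G.tgt e.1)

/-- The fiber of a node, as a node of the minimal base. -/
def fibClass (G : FinDigraph) (u : G.V) : (base G).V := Quotient.mk (fibSetoid G) u

/-- A partition (given as an equivalence relation) is balanced if any two equivalent
nodes receive the same number of edges from each class. -/
def IsBalanced (G : FinDigraph) (r : G.V → G.V → Prop) : Prop :=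
  Equivalence r ∧ ∀ u v, r u v → ∀ w : G.V,
    Nat.card {e : G.E // G.tgt e = u ∧ r (G.src e) w} =
    Nat.card {e : G.E // G.tgt e = v ∧ r (G.src e) w}

/-- The multiset of states of the in-neighbors of `u` (with edge multiplicity). -/
noncomputable def inStates (G : FinDigraph) {S : Type} (x : G.V → S) (u : G.V) :
    Multiset S :=
  letI := Fintype.ofFinite G.E
  letI := Classical.decEq G.V
  (Finset.univ.filter (fun e => G.tgt e = u)).val.map fun e => x (G.src e)

end FinDigraph

/-- One graph convolution layer: the new feature of `u` is
`F (Σ_{e : in-edge of u} c • W (h (src e)))`. -/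
noncomputable def FinDigraph.gcUpdate (G : FinDigraph) {m m' : ℕ} (c : ℝ)
    (W : (Fin m → ℝ) →ₗ[ℝ] (Fin m' → ℝ)) (F : (Fin m' → ℝ) → (Fin m' → ℝ))
    (h : G.V → (Fin m → ℝ)) (u : G.V) : Fin m' → ℝ :=
  letI := Fintype.ofFinite G.E
  letI := Classical.decEq G.V
  F (∑ e ∈ Finset.univ.filter (fun e => G.tgt e = u), c • W (h (G.src e)))

/-!
An isomorphism of input trees `F : T(u) ≅ T(v)` maps the depth-one nodes of `T(u)` (the in-edges
of `u`) bijectively onto those of `T(v)`, and maps the branch of `T(u)` hanging from an in-edge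
`e` onto the branch of `T(v)` hanging from the matching in-edge `f`; these branches are the input
trees of the sources of `e` and `f`. Hence nodes in the same fiber have in-edges matched by a
bijection that respects the fibers of their sources. In the minimal base the in-edges of a fiber
are the in-edges of its representative, so on features constant on fibers the aggregation at `u`
agrees with the aggregation at the fiber of `u` in the base.
-/

namespace FinDigraph

variable {G H : FinDigraph}

theorem farEnd_append (u : G.V) (e : G.E) (l : List G.E) :
    G.farEnd u (l ++ [e]) = G.farEnd (G.src e) l := by
  cases l <;> rfl

theorem isInPath_append {u : G.V} {e : G.E} (he : G.tgt e = u) (l : List G.E) :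
    G.IsInPath u (l ++ [e]) ↔ G.IsInPath (G.src e) l := by
  induction l with
  | nil => simp [IsInPath, farEnd, he]
  | cons a l ih => exact and_congr ih (by rw [← farEnd_append u e l]; rfl)

theorem parent_val (u : G.V) (p : G.InPath u) : (G.parent u p).1 = p.1.tail := by
  obtain ⟨l, hl⟩ := p
  cases l <;> rfl

theorem parent_iterate_val (u : G.V) (k : ℕ) (p : G.InPath u) :
    ((G.parent u)^[k] p).1 = p.1.drop k := by
  induction k with
  | zero => rfl
  | succ k ih => rw [Function.iterate_succ_apply', parent_val, ih, List.tail_drop]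

theorem eq_root_of_length_eq_zero {u : G.V} {p : G.InPath u} (hp : p.1.length = 0) :
    p = G.root u :=
  Subtype.ext (List.eq_nil_of_length_eq_zero hp)

section InTreeEquiv

variable {u : G.V} {v : H.V}

structure IsInTreeEquiv (F : G.InPath u ≃ H.InPath v) : Prop where
  length_apply : ∀ p, (F p).1.length = p.1.length
  apply_parent : ∀ p, F (G.parent u p) = H.parent v (F p)

namespace IsInTreeEquiv

variable {F : G.InPath u ≃ H.InPath v}

theorem inTreeIso (hF : IsInTreeEquiv F) : InTreeIso G u H v :=
  ⟨F, eq_root_of_length_eq_zero (hF.length_apply _), hF.length_apply, hF.apply_parent⟩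

theorem apply_parent_iterate (hF : IsInTreeEquiv F) (k : ℕ) (p : G.InPath u) :
    F ((G.parent u)^[k] p) = (H.parent v)^[k] (F p) :=
  Function.Semiconj.iterate_right hF.apply_parent k p

end IsInTreeEquiv

end InTreeEquiv

section Branch

variable {u : G.V} {e : G.E}

def edgePath (he : G.tgt e = u) : G.InPath u := ⟨[e], trivial, he⟩

noncomputable def inEdgeEquivDepthOne (u : G.V) :
    {e // G.tgt e = u} ≃ {p : G.InPath u // p.1.length = 1} :=
  Equiv.ofBijective (fun e => ⟨edgePath e.2, rfl⟩)
    ⟨fun e e' h => Subtype.ext (List.singleton_inj.mp (congrArg (·.1.1) h)), by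
      rintro ⟨⟨l, hl⟩, hlen⟩
      obtain ⟨a, rfl⟩ := List.length_eq_one_iff.mp hlen
      exact ⟨⟨a, hl.2⟩, rfl⟩⟩

/-- The branch of the input tree of `u` hanging from its depth-one node `[e]`. -/
def branch (he : G.tgt e = u) : Set (G.InPath u) :=
  {q | (G.parent u)^[q.1.length - 1] q = edgePath he}

def extend (he : G.tgt e = u) (p : G.InPath (G.src e)) : G.InPath u :=
  ⟨p.1 ++ [e], (isInPath_append he p.1).mpr p.2⟩

theorem extend_injective (he : G.tgt e = u) : Function.Injective (extend he) :=
  fun _ _ h => Subtype.ext (List.append_cancel_right (congrArg Subtype.val h))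

theorem extend_mem_branch (he : G.tgt e = u) (p : G.InPath (G.src e)) :
    extend he p ∈ branch he :=
  Subtype.ext (by rw [parent_iterate_val]; simp [extend, edgePath])

theorem exists_extend_of_mem_branch (he : G.tgt e = u) {q : G.InPath u} (hq : q ∈ branch he) :
    ∃ p, extend he p = q := by
  have hdrop : q.1.drop (q.1.length - 1) = [e] := by
    rw [← parent_iterate_val]
    exact congrArg Subtype.val hq
  have hsplit : q.1 = q.1.take (q.1.length - 1) ++ [e] := by
    rw [← hdrop, List.take_append_drop]
  exact ⟨⟨_, (isInPath_append he _).mp (hsplit ▸ q.2)⟩, Subtype.ext hsplit.symm⟩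

theorem parent_extend (he : G.tgt e = u) (p : G.InPath (G.src e)) (hp : p.1 ≠ []) :
    G.parent u (extend he p) = extend he (G.parent _ p) :=
  Subtype.ext <| (parent_val u _).trans <| (List.tail_append_of_ne_nil hp).trans <|
    congrArg (· ++ [e]) (parent_val _ p).symm

noncomputable def branchEquiv (he : G.tgt e = u) : G.InPath (G.src e) ≃ branch he :=
  Equiv.ofBijective (fun p => ⟨extend he p, extend_mem_branch he p⟩)
    ⟨fun _ _ h => extend_injective he (congrArg Subtype.val h),
      fun q => (exists_extend_of_mem_branch he q.2).imp fun _ hp => Subtype.ext hp⟩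

end Branch

namespace IsInTreeEquiv

variable {u : G.V} {v : H.V} {F : G.InPath u ≃ H.InPath v}

noncomputable def inEdgeEquiv (hF : IsInTreeEquiv F) : {e // G.tgt e = u} ≃ {f // H.tgt f = v} :=
  (inEdgeEquivDepthOne u).trans <|
    (F.subtypeEquiv fun p => by rw [hF.length_apply]).trans (inEdgeEquivDepthOne v).symm

theorem apply_edgePath (hF : IsInTreeEquiv F) (e : {e // G.tgt e = u}) :
    F (edgePath e.2) = edgePath (hF.inEdgeEquiv e).2 :=
  congrArg Subtype.val ((inEdgeEquivDepthOne v).apply_symm_apply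
    (F.subtypeEquiv (fun p => by rw [hF.length_apply]) (inEdgeEquivDepthOne u e))).symm

variable {e : G.E} {f : H.E} {he : G.tgt e = u} {hf : H.tgt f = v}

theorem apply_mem_branch_iff (hF : IsInTreeEquiv F) (hef : F (edgePath he) = edgePath hf)
    (q : G.InPath u) : F q ∈ branch hf ↔ q ∈ branch he := by
  simp only [branch, Set.mem_ofPred_eq, hF.length_apply, ← hF.apply_parent_iterate, ← hef,
    F.apply_eq_iff_eq]

noncomputable def branchMap (hF : IsInTreeEquiv F) (hef : F (edgePath he) = edgePath hf) :
    G.InPath (G.src e) ≃ H.InPath (H.src f) :=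
  (branchEquiv he).trans <|
    (F.subtypeEquiv fun q => (hF.apply_mem_branch_iff hef q).symm).trans (branchEquiv hf).symm

theorem extend_branchMap (hF : IsInTreeEquiv F) (hef : F (edgePath he) = edgePath hf)
    (p : G.InPath (G.src e)) : extend hf (hF.branchMap hef p) = F (extend he p) :=
  congrArg Subtype.val ((branchEquiv hf).apply_symm_apply _)

theorem length_branchMap (hF : IsInTreeEquiv F) (hef : F (edgePath he) = edgePath hf)
    (p : G.InPath (G.src e)) : (hF.branchMap hef p).1.length = p.1.length := by
  have h := congrArg (·.1.length) (hF.extend_branchMap hef p)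
  simp only [hF.length_apply] at h
  simpa [extend] using h

theorem branchMap_isInTreeEquiv (hF : IsInTreeEquiv F) (hef : F (edgePath he) = edgePath hf) :
    IsInTreeEquiv (hF.branchMap hef) where
  length_apply := hF.length_branchMap hef
  apply_parent := by
    intro p
    by_cases hp : p.1 = []
    · obtain rfl : p = G.root _ := Subtype.ext hp
      refine (eq_root_of_length_eq_zero (hF.length_branchMap hef _)).trans
        (eq_root_of_length_eq_zero ?_).symm
      rw [parent_val, List.length_tail, hF.length_branchMap]
      rfl
    · have hne : (hF.branchMap hef p).1 ≠ [] := by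
        rwa [← List.length_pos_iff, hF.length_branchMap, List.length_pos_iff]
      apply extend_injective hf
      rw [hF.extend_branchMap, ← parent_extend he _ hp, hF.apply_parent,
        ← hF.extend_branchMap hef, parent_extend hf _ hne]

end IsInTreeEquiv

theorem InTreeIso.exists_inEdgeEquiv {u : G.V} {v : H.V} (h : InTreeIso G u H v) :
    ∃ σ : {e // G.tgt e = u} ≃ {f // H.tgt f = v},
      ∀ e, InTreeIso G (G.src e.1) H (H.src (σ e).1) := by
  obtain ⟨F, -, hlen, hpar⟩ := h
  have hF : IsInTreeEquiv F := ⟨hlen, hpar⟩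
  exact ⟨hF.inEdgeEquiv, fun e => (hF.branchMap_isInTreeEquiv (hF.apply_edgePath e)).inTreeIso⟩

section FiberSums

open Finset

variable {M : Type} [AddCommMonoid M] [Fintype G.E] [DecidableEq G.V]

theorem sum_inEdges_eq_of_fibEquiv {u v : G.V} (huv : G.fibEquiv u v) (g : (base G).V → M) :
    ∑ e ∈ univ.filter (fun e => G.tgt e = u), g (G.fibClass (G.src e)) =
      ∑ e ∈ univ.filter (fun e => G.tgt e = v), g (G.fibClass (G.src e)) := by
  obtain ⟨σ, hσ⟩ := huv.exists_inEdgeEquiv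
  rw [sum_subtype (p := fun e => G.tgt e = u) _ (fun _ => by simp),
    sum_subtype (p := fun e => G.tgt e = v) _ (fun _ => by simp)]
  exact Fintype.sum_equiv σ _ _ fun e => congrArg g (Quotient.sound (hσ e))

def baseInEdgeEquiv (C : (base G).V) :
    {ε // (base G).tgt ε = C} ≃ {e // G.tgt e = C.out} where
  toFun ε := ⟨ε.1.1, ε.1.2.trans (congrArg Quotient.out ε.2)⟩
  invFun e := ⟨⟨e.1, by rw [e.2]; exact congrArg Quotient.out (Quotient.out_eq C).symm⟩, by
    show G.fibClass (G.tgt e.1) = C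
    rw [e.2]
    exact Quotient.out_eq C⟩
  left_inv _ := rfl
  right_inv _ := rfl

theorem sum_inEdges_base [Fintype (base G).E] [DecidableEq (base G).V] (u : G.V)
    (g : (base G).V → M) :
    ∑ ε ∈ univ.filter (fun ε => (base G).tgt ε = G.fibClass u), g ((base G).src ε) =
      ∑ e ∈ univ.filter (fun e => G.tgt e = u), g (G.fibClass (G.src e)) := by
  rw [sum_subtype (p := fun ε => (base G).tgt ε = G.fibClass u) _ (fun _ => by simp),
    ← sum_inEdges_eq_of_fibEquiv (Quotient.exact (Quotient.out_eq (G.fibClass u))),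
    sum_subtype (p := fun e => G.tgt e = (G.fibClass u).out) _ (fun _ => by simp)]
  exact Fintype.sum_equiv (baseInEdgeEquiv _) _ _ fun _ => rfl

end FiberSums

end FinDigraph

/-- for features constant on fibers (`hB ∘ φ = h` where `φ` is the
fibration of `G` onto its minimal base), one graph convolution step on `G` projects
exactly onto the corresponding step on the base with its edge multiplicities. -/
theorem gc_projects_to_base (G : FinDigraph) (m m' : ℕ) (c : ℝ)
    (W : (Fin m → ℝ) →ₗ[ℝ] (Fin m' → ℝ)) (F : (Fin m' → ℝ) → (Fin m' → ℝ))
    (h : G.V → (Fin m → ℝ)) (hB : (FinDigraph.base G).V → (Fin m → ℝ))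
    (hconst : ∀ u : G.V, hB (FinDigraph.fibClass G u) = h u) :
    ∀ u : G.V,
      FinDigraph.gcUpdate G c W F h u =
      FinDigraph.gcUpdate (FinDigraph.base G) c W F hB (FinDigraph.fibClass G u) := by
  intro u
  let := Fintype.ofFinite G.E
  let := Fintype.ofFinite (FinDigraph.base G).E
  classical
  simp only [FinDigraph.gcUpdate, ← hconst]
  exact congrArg F (FinDigraph.sum_inEdges_base u fun C => c • W (hB C)).symm
end

section
/- The map sending a finite directed graph to (the isomorphism class of) its minimal fibration base is idempotent: the minimal fibration base of the minimal fibration base B of G is isomorphic to B itself. -/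
/-!
Call a relation `R` between the nodes of `G` and `H` an in-bisimulation if, whenever `R u v`,
the in-edges of `u` and of `v` can be matched bijectively so that matched edges have
`R`-related sources. Two nodes have isomorphic input trees iff some in-bisimulation relates
them: along an in-bisimulation, paths can be lifted edge by edge; conversely, an isomorphism
`F` of input trees relates the far end of every path `p` to that of `F p`, and the children of
`p` (its one-edge extensions) are matched with those of `F p`.

The relation "`u` lies in the fiber `C`" between `G` and its base is an in-bisimulation, since
the edges of the base into `C` are those of `G` into a representative of `C`. So every node of
`G` has the input tree of its fiber, distinct nodes of the base have non-isomorphic input trees,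
and the base of the base is the base itself.
-/

namespace FinDigraph

section

variable {G H : FinDigraph}

def IsInBisimulation (G H : FinDigraph) (R : G.V → H.V → Prop) : Prop :=
  ∀ u v, R u v → ∃ b : {e : G.E // G.tgt e = u} ≃ {f : H.E // H.tgt f = v},
    ∀ e, R (G.src e.1) (H.src (b e).1)

section LiftPath

variable {R : G.V → H.V → Prop}
  (β : ∀ u v, R u v → {e : G.E // G.tgt e = u} ≃ {f : H.E // H.tgt f = v})
  (hβ : ∀ u v (h : R u v) e, R (G.src e.1) (H.src (β u v h e).1))
  {u : G.V} {v : H.V} (huv : R u v)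

def liftPath : (l : List G.E) → G.IsInPath u l →
    {m : List H.E // H.IsInPath v m ∧ m.length = l.length ∧
      R (G.farEnd u l) (H.farEnd v m)}
  | [], _ => ⟨[], trivial, rfl, huv⟩
  | e :: es, h =>
    let m := liftPath es h.1
    let f := β _ _ m.2.2.2 ⟨e, h.2⟩
    ⟨f.1 :: m.1, ⟨m.2.1, f.2⟩, congrArg Nat.succ m.2.2.1, hβ _ _ m.2.2.2 ⟨e, h.2⟩⟩

theorem liftPath_injective :
    ∀ (l₁ : List G.E) (h₁ : G.IsInPath u l₁) (l₂ : List G.E) (h₂ : G.IsInPath u l₂),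
      (liftPath β hβ huv l₁ h₁).1 = (liftPath β hβ huv l₂ h₂).1 → l₁ = l₂
  | [], _, [], _, _ => rfl
  | [], _, _ :: _, _, heq => by simp [liftPath] at heq
  | _ :: _, _, [], _, heq => by simp [liftPath] at heq
  | e₁ :: es₁, h₁, e₂ :: es₂, h₂, heq => by
    simp only [liftPath, List.cons.injEq] at heq
    obtain rfl := liftPath_injective es₁ h₁.1 es₂ h₂.1 heq.2
    obtain rfl : e₁ = e₂ := congrArg Subtype.val ((β _ _ _).injective (Subtype.ext heq.1))
    rfl

theorem liftPath_surjective :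
    ∀ (m : List H.E), H.IsInPath v m → ∃ l hl, (liftPath β hβ huv l hl).1 = m
  | [], _ => ⟨[], trivial, rfl⟩
  | f :: fs, hm => by
    obtain ⟨es, hes, hlift⟩ := liftPath_surjective fs hm.1
    have hf : H.tgt f = H.farEnd v (liftPath β hβ huv es hes).1 := hlift ▸ hm.2
    set e := (β _ _ (liftPath β hβ huv es hes).2.2.2).symm ⟨f, hf⟩ with he
    refine ⟨e.1 :: es, ⟨hes, e.2⟩, ?_⟩
    simp only [liftPath, List.cons.injEq]
    refine ⟨?_, hlift⟩
    rw [he, Equiv.apply_symm_apply]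

end LiftPath

theorem IsInBisimulation.inTreeIso {R : G.V → H.V → Prop} (hR : IsInBisimulation G H R)
    {u : G.V} {v : H.V} (huv : R u v) : InTreeIso G u H v := by
  choose β hβ using hR
  let F : G.InPath u → H.InPath v := fun p =>
    ⟨(liftPath β hβ huv p.1 p.2).1, (liftPath β hβ huv p.1 p.2).2.1⟩
  have hF : Function.Bijective F := by
    refine ⟨fun p q hpq => Subtype.ext ?_, fun m => ?_⟩
    · exact liftPath_injective β hβ huv p.1 p.2 q.1 q.2 (congrArg Subtype.val hpq)
    · obtain ⟨l, hl, hlift⟩ := liftPath_surjective β hβ huv m.1 m.2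
      exact ⟨⟨l, hl⟩, Subtype.ext hlift⟩
  refine ⟨Equiv.ofBijective F hF, rfl, fun p => (liftPath β hβ huv p.1 p.2).2.2.1, ?_⟩
  rintro ⟨_ | ⟨e, es⟩, h⟩ <;> rfl

def child (u : G.V) (p : G.InPath u) (e : {e : G.E // G.tgt e = G.farEnd u p.1}) :
    {q : G.InPath u // G.parent u q = p ∧ q.1.length = p.1.length + 1} :=
  ⟨⟨e.1 :: p.1, p.2, e.2⟩, rfl, rfl⟩

theorem child_bijective (u : G.V) (p : G.InPath u) : Function.Bijective (child u p) := by
  refine ⟨fun e₁ e₂ h => ?_, ?_⟩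
  · have := congrArg (fun q => q.1.1) h
    simp only [child, List.cons.injEq] at this
    exact Subtype.ext this.1
  · rintro ⟨⟨_ | ⟨e, es⟩, hq⟩, hpar, hlen⟩
    · simp at hlen
    · subst hpar
      exact ⟨⟨e, hq.2⟩, rfl⟩

theorem isInBisimulation_farEnd {u : G.V} {v : H.V} (F : G.InPath u ≃ H.InPath v)
    (hlen : ∀ p, (F p).1.length = p.1.length)
    (hpar : ∀ p, F (G.parent u p) = H.parent v (F p)) :
    IsInBisimulation G H fun x y => ∃ p, G.farEnd u p.1 = x ∧ H.farEnd v (F p).1 = y := by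
  rintro _ _ ⟨p, rfl, rfl⟩
  let cG := Equiv.ofBijective _ (child_bijective u p)
  let cH := Equiv.ofBijective _ (child_bijective v (F p))
  let Fc : {q // G.parent u q = p ∧ q.1.length = p.1.length + 1} ≃
      {q // H.parent v q = F p ∧ q.1.length = (F p).1.length + 1} :=
    F.subtypeEquiv fun q => by rw [← hpar, F.injective.eq_iff, hlen, hlen]
  exact ⟨cG.trans (Fc.trans cH.symm), fun e => ⟨(cG e).1, rfl,
    congrArg (fun q => H.farEnd v q.1.1) (cH.apply_symm_apply (Fc (cG e))).symm⟩⟩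

theorem inTreeIso_iff_exists_isInBisimulation {u : G.V} {v : H.V} :
    InTreeIso G u H v ↔ ∃ R, IsInBisimulation G H R ∧ R u v := by
  refine ⟨fun ⟨F, hroot, hlen, hpar⟩ => ?_, fun ⟨R, hR, huv⟩ => hR.inTreeIso huv⟩
  refine ⟨_, isInBisimulation_farEnd F hlen hpar, G.root u, rfl, ?_⟩
  rw [hroot]
  rfl

theorem isInBisimulation_inTreeIso : IsInBisimulation G H fun u v => InTreeIso G u H v := by
  intro u v h
  obtain ⟨R, hR, huv⟩ := inTreeIso_iff_exists_isInBisimulation.1 h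
  obtain ⟨b, hb⟩ := hR u v huv
  exact ⟨b, fun e => hR.inTreeIso (hb e)⟩

end

def inEdgesEquivBase (G : FinDigraph) (C : Quotient (fibSetoid G)) :
    {e : G.E // G.tgt e = C.out} ≃ {f : (base G).E // (base G).tgt f = C} where
  toFun e := ⟨⟨e.1, by rw [e.2, Quotient.out_eq]⟩, by
    show Quotient.mk _ (G.tgt e.1) = C
    rw [e.2, Quotient.out_eq]⟩
  invFun f := ⟨f.1.1, f.1.2.trans (congrArg Quotient.out f.2)⟩
  left_inv _ := rfl
  right_inv _ := rfl

theorem isInBisimulation_fibClass (G : FinDigraph) :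
    IsInBisimulation G (base G) fun u C => fibClass G u = C := by
  rintro u _ rfl
  obtain ⟨b, hb⟩ := isInBisimulation_inTreeIso u _
    (inTreeIso_symm (Quotient.mk_out (s := fibSetoid G) u))
  exact ⟨b.trans (inEdgesEquivBase G _), fun e => Quotient.sound (hb e)⟩

theorem inTreeIso_fibClass (G : FinDigraph) (u : G.V) :
    InTreeIso G u (base G) (fibClass G u) :=
  (isInBisimulation_fibClass G).inTreeIso rfl

theorem eq_of_fibEquiv_base (G : FinDigraph) {C C' : (base G).V}
    (h : fibEquiv (base G) C C') : C = C' := by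
  obtain ⟨u⟩ := C
  obtain ⟨u'⟩ := C'
  exact Quotient.sound <| inTreeIso_trans (inTreeIso_fibClass G u)
    (inTreeIso_trans h (inTreeIso_symm (inTreeIso_fibClass G u')))

theorem isIso_base_of_fibEquiv_eq (G : FinDigraph) (h : ∀ u v, fibEquiv G u v → u = v) :
    IsIso (base G) G := by
  refine ⟨⟨Quotient.lift id h, Subtype.val, fun _ => rfl, fun _ => rfl⟩,
    ⟨?_, ?_⟩, ?_, ?_⟩
  · rintro ⟨u⟩ ⟨v⟩ huv
    exact congrArg _ huv
  · exact fun u => ⟨Quotient.mk _ u, rfl⟩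
  · exact fun _ _ => Subtype.ext
  · exact fun e => ⟨⟨e, (h _ _ (Quotient.mk_out (s := fibSetoid G) _)).symm⟩, rfl⟩

end FinDigraph

/-- taking the minimal fibration base is idempotent: the minimal
fibration base of the minimal fibration base of `G` is isomorphic to the base itself. -/
theorem base_idempotent (G : FinDigraph) :
    FinDigraph.IsIso (FinDigraph.base (FinDigraph.base G)) (FinDigraph.base G) :=
  FinDigraph.isIso_base_of_fibEquiv_eq _ fun _ _ => FinDigraph.eq_of_fibEquiv_base G
end
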